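/- arXiv:1806.00974 — 2 statements merged into one kernel-verified Lean document; each statement's English description precedes it below -/
import Mathlib

section
/- Let x, c be nonzero vectors in a real inner product space and let t ≥ 0. Define x_g(t) = ‖x‖ · ((1+t)·x − t·c) / ‖(1+t)·x − t·c‖, assuming (1+t)·x − t·c ≠ 0 for all t in question. Then ⟪x_g(t), c⟫ ≤ ⟪x, c⟫ whenever ⟪x, x⟫·⟪c, c⟫ ≥ ⟪x, c⟫², with equality in the trivial case t = 0. -/
open RealInnerProductSpace

private lemma key_ineq (a c2 n m t : ℝ) (ht : 0 ≤ t) (hn : 0 < n) (hmp : 0 < m)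
    (hc2 : 0 < c2) (hm : m ^ 2 = (1 + t) ^ 2 * n ^ 2 - 2 * t * (1 + t) * a + t ^ 2 * c2)
    (hcs : a ^ 2 ≤ n ^ 2 * c2) :
    n * ((1 + t) * a - t * c2) ≤ a * m := by
  have hdiff : (m * a) ^ 2 - (n * ((1 + t) * a - t * c2)) ^ 2
      = (n ^ 2 * c2 - a ^ 2) * (2 * t * (1 + t) * a - t ^ 2 * c2) := by
    rw [mul_pow, mul_pow, hm]; ring
  rcases le_or_gt a 0 with hA | hA
  · have hP : 0 ≤ n * (t * c2 - (1 + t) * a) := by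
      have : (0:ℝ) ≤ t * c2 - (1 + t) * a := by nlinarith
      positivity
    have hQ : 0 ≤ m * (-a) := by
      have : (0:ℝ) ≤ -a := by linarith
      positivity
    have hfac : 0 ≤ (n ^ 2 * c2 - a ^ 2) * (t ^ 2 * c2 - 2 * t * (1 + t) * a) := by
      apply mul_nonneg (by linarith)
      have h1' : (0:ℝ) ≤ t ^ 2 * c2 := by positivity
      have h2' : (0:ℝ) ≤ 2 * t * (1 + t) * (-a) := by
        apply mul_nonneg (by nlinarith) (by linarith)
      nlinarith
    nlinarith [hP, hQ, hfac, hdiff]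
  · rcases le_or_gt ((1 + t) * a - t * c2) 0 with hL | hL
    · have h3 : n * ((1 + t) * a - t * c2) ≤ 0 := mul_nonpos_of_nonneg_of_nonpos hn.le hL
      nlinarith [mul_pos hA hmp]
    · have hkey : 0 ≤ 2 * t * (1 + t) * a - t ^ 2 * c2 := by nlinarith
      have hfac : 0 ≤ (n ^ 2 * c2 - a ^ 2) * (2 * t * (1 + t) * a - t ^ 2 * c2) :=
        mul_nonneg (by linarith) hkey
      have hP : 0 < n * ((1 + t) * a - t * c2) := mul_pos hn hL
      have hQ : 0 < a * m := mul_pos hA hmp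
      nlinarith [hP, hQ, hfac, hdiff]

theorem stmt_2 {E : Type*} [NormedAddCommGroup E] [InnerProductSpace ℝ E]
    (x c : E) (hx : x ≠ 0) (hc : c ≠ 0) (t : ℝ) (ht : 0 ≤ t)
    (hv : (1 + t) • x - t • c ≠ 0)
    (hcs : ⟪x, c⟫ ^ 2 ≤ ⟪x, x⟫ * ⟪c, c⟫) :
    ⟪(‖x‖ / ‖(1 + t) • x - t • c‖) • ((1 + t) • x - t • c), c⟫ ≤ ⟪x, c⟫ ∧
      (t = 0 → ⟪(‖x‖ / ‖(1 + t) • x - t • c‖) • ((1 + t) • x - t • c), c⟫ = ⟪x, c⟫) := by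
  have hvn : (0:ℝ) < ‖(1 + t) • x - t • c‖ := norm_pos_iff.mpr hv
  have hxn : (0:ℝ) < ‖x‖ := norm_pos_iff.mpr hx
  have h1 : ⟪(‖x‖ / ‖(1 + t) • x - t • c‖) • ((1 + t) • x - t • c), c⟫
      = (‖x‖ / ‖(1 + t) • x - t • c‖) * ((1+t) * ⟪x,c⟫ - t * ⟪c,c⟫) := by
    rw [real_inner_smul_left, inner_sub_left, real_inner_smul_left, real_inner_smul_left]
  have hx2 : ⟪x,x⟫ = ‖x‖^2 := real_inner_self_eq_norm_sq x
  have hm : ‖(1 + t) • x - t • c‖^2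
      = (1+t)^2 * ‖x‖^2 - 2*t*(1+t)*⟪x,c⟫ + t^2*⟪c,c⟫ := by
    rw [← real_inner_self_eq_norm_sq, ← hx2]
    simp only [inner_sub_left, inner_sub_right, real_inner_smul_left, real_inner_smul_right,
      real_inner_comm x c]
    ring
  have hc2 : (0:ℝ) < ⟪c,c⟫ := by
    rw [real_inner_self_eq_norm_sq]
    exact pow_pos (norm_pos_iff.mpr hc) 2
  rw [hx2] at hcs
  constructor
  · rw [h1, div_mul_eq_mul_div, div_le_iff₀ hvn]
    exact key_ineq ⟪x,c⟫ ⟪c,c⟫ ‖x‖ ‖(1 + t) • x - t • c‖ t ht hxn hvn hc2 hm hcs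
  · intro h0
    subst h0
    rw [h1]
    have hvx : (1 + (0:ℝ)) • x - (0:ℝ) • c = x := by
      simp
    rw [hvx, div_self (ne_of_gt hxn)]
    ring
end

section
/- Let x, c be linearly independent vectors in a real inner product space with ‖x‖ = ‖c‖ (or general nonzero), and for M ≥ 0 define g(M) = ⟪(1+M)x − Mc, c⟫ / ‖(1+M)x − Mc‖. Then g is monotonically nonincreasing in M on [0, ∞). -/
/-!
Along the line `γ M = (1 + M) • x - M • c` the anchor is `c = γ M - (1 + M) • (x - c)`, so the
numerator of the derivative of `⟪γ M, c⟫ / ‖γ M‖`, namely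
`⟪γ', c⟫ ‖γ‖² - ⟪γ, c⟫ ⟪γ, γ'⟫` with `γ' = x - c`, equals
`-(1 + M) (‖γ‖² ‖γ'‖² - ⟪γ, γ'⟫²)`, which is nonpositive for `M ≥ -1` by Cauchy–Schwarz.
-/

open RealInnerProductSpace

section

variable {E : Type*} [NormedAddCommGroup E] [InnerProductSpace ℝ E]

theorem HasDerivAt.norm {f : ℝ → E} {f' : E} {t : ℝ} (hf : HasDerivAt f f' t) (h0 : f t ≠ 0) :
    HasDerivAt (‖f ·‖) (⟪f t, f'⟫ / ‖f t‖) t := by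
  have h := hf.norm_sq.sqrt (by positivity)
  simp only [Real.sqrt_sq (norm_nonneg _)] at h
  convert h using 1
  field_simp

theorem HasDerivAt.inner_div_norm {f : ℝ → E} {f' : E} {t : ℝ} (w : E) (hf : HasDerivAt f f' t)
    (h0 : f t ≠ 0) :
    HasDerivAt (fun s => ⟪f s, w⟫ / ‖f s‖)
      ((⟪f', w⟫ * ‖f t‖ ^ 2 - ⟪f t, w⟫ * ⟪f t, f'⟫) / ‖f t‖ ^ 3) t := by
  have hn : ‖f t‖ ≠ 0 := norm_ne_zero_iff.2 h0
  refine ((hf.inner ℝ (hasDerivAt_const t w)).div (hf.norm h0) hn).congr_deriv ?_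
  rw [inner_zero_right, zero_add]
  field_simp

theorem inner_sub_smul_mul_norm_sq_le (v d : E) {a : ℝ} (ha : 0 ≤ a) :
    ⟪d, v - a • d⟫ * ‖v‖ ^ 2 ≤ ⟪v, v - a • d⟫ * ⟪v, d⟫ := by
  have hcs := real_inner_mul_inner_self_le v d
  simp only [inner_sub_right, inner_smul_right, real_inner_self_eq_norm_sq,
    real_inner_comm v d] at hcs ⊢
  nlinarith

end

theorem stmt_12_general {E : Type*} [NormedAddCommGroup E] [InnerProductSpace ℝ E]
    (x c : E) (hli : LinearIndependent ℝ ![x, c]) :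
    AntitoneOn (fun M : ℝ => ⟪(1 + M) • x - M • c, c⟫ / ‖(1 + M) • x - M • c‖)
      (Set.Ici 0) := by
  set γ : ℝ → E := fun M => (1 + M) • x - M • c
  have hγ0 (M : ℝ) : γ M ≠ 0 := fun h => by
    have := LinearIndependent.pair_iff.1 hli (1 + M) (-M) (by rwa [neg_smul, ← sub_eq_add_neg])
    linarith [this.1, this.2]
  have hγ (M : ℝ) : HasDerivAt γ (x - c) M := by
    refine ((((hasDerivAt_id' M).const_add 1).smul_const x).sub
      ((hasDerivAt_id' M).smul_const c)).congr_deriv ?_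
    simp
  have hderiv (M : ℝ) := (hγ M).inner_div_norm c (hγ0 M)
  refine antitoneOn_of_hasDerivWithinAt_nonpos (convex_Ici 0)
    (fun M _ => (hderiv M).continuousAt.continuousWithinAt)
    (fun M _ => (hderiv M).hasDerivWithinAt) fun M hM => ?_
  rw [interior_Ici, Set.mem_Ioi] at hM
  have hc_eq : γ M - (1 + M) • (x - c) = c := by simp only [γ]; module
  have hcs := inner_sub_smul_mul_norm_sq_le (γ M) (x - c) (by linarith : (0 : ℝ) ≤ 1 + M)
  rw [hc_eq] at hcs
  exact div_nonpos_of_nonpos_of_nonneg (sub_nonpos.2 hcs) (by positivity)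

theorem stmt_12 {E : Type*} [NormedAddCommGroup E] [InnerProductSpace ℝ E]
    (x c : E) (hx : x ≠ 0) (hc : c ≠ 0) (hli : LinearIndependent ℝ ![x, c]) :
    AntitoneOn (fun M : ℝ => ⟪(1 + M) • x - M • c, c⟫ / ‖(1 + M) • x - M • c‖)
      (Set.Ici 0) :=
  stmt_12_general x c hli
end
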